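/- Let ψ : X → H be weakly measurable and suppose (ψ,ψ) is a reproducing pair. Then ψ is a continuous frame, i.e. there exist constants 0 < m ≤ M < ∞ such that m‖f‖² ≤ ∫_X |⟨f,ψ(x)⟩|² dμ(x) ≤ M‖f‖² for all f ∈ H, and V_ψ(X,μ) is (identified with) a closed subspace of L²(X,dμ). -/

import Mathlib

open MeasureTheory Filter Topology
open scoped Classical ENNReal NNReal

noncomputable section

variable {H : Type*} [NormedAddCommGroup H] [InnerProductSpace ℂ H] [CompleteSpace H]
  [TopologicalSpace.SeparableSpace H]
variable {X : Type*} [TopologicalSpace X] [LocallyCompactSpace X] [MeasurableSpace X]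
  [BorelSpace X]

/-- Notation for the Mathlib inner product (conjugate-linear in the first slot);
the paper's inner product `⟨f, g⟩` (linear in the first slot) is `⟪g, f⟫`. -/
local notation "⟪" x ", " y "⟫" => @inner ℂ _ _ x y

/-- `φ : X → H` is weakly measurable: `x ↦ ⟨f, φ x⟩` is measurable for every `f ∈ H`. -/
def WeaklyMeasurable (φ : X → H) : Prop :=
  ∀ f : H, Measurable fun x => ⟪φ x, f⟫

/-- `ξ ∈ 𝒱_φ(X,μ)`: `ξ` is measurable, the integral `∫ ξ(x) ⟨φ(x), g⟩ dμ(x)` exists for all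
`g ∈ H`, and it defines a bounded conjugate-linear functional of `g`. -/
def MemV (μ : Measure X) (φ : X → H) (ξ : X → ℂ) : Prop :=
  Measurable ξ ∧ (∀ g : H, Integrable (fun x => ξ x * ⟪g, φ x⟫) μ) ∧
    ∃ c : ℝ, ∀ g : H, ‖∫ x, ξ x * ⟪g, φ x⟫ ∂μ‖ ≤ c * ‖g‖

/-- The map `T_φ : 𝒱_φ(X,μ) → H`, determined weakly by
`⟨T_φ ξ, g⟩ = ∫ ξ(x) ⟨φ(x), g⟩ dμ(x)` for all `g ∈ H` (junk value `0` off `𝒱_φ`). -/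
def Tmap (μ : Measure X) (φ : X → H) (ξ : X → ℂ) : H :=
  if h : MemV μ φ ξ then
    have key : ∀ g : H, Integrable (fun x => (starRingEnd ℂ) (ξ x) * ⟪φ x, g⟫) μ := by
      intro g
      have h2 : Integrable (fun x => (RCLike.conjLIE : ℂ ≃ₗᵢ[ℝ] ℂ) (ξ x * ⟪g, φ x⟫)) μ :=
        ((RCLike.conjLIE : ℂ ≃ₗᵢ[ℝ] ℂ).integrable_comp_iff).2 (h.2.1 g)
      simpa [RCLike.conjLIE_apply, map_mul] using h2
    (InnerProductSpace.toDual ℂ H).symm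
      (LinearMap.mkContinuousOfExistsBound
        { toFun := fun g => ∫ x, (starRingEnd ℂ) (ξ x) * ⟪φ x, g⟫ ∂μ
          map_add' := fun g g' => by
            simp only [inner_add_right, mul_add]
            exact integral_add (key g) (key g')
          map_smul' := fun c g => by
            simp only [inner_smul_right, RingHom.id_apply]
            calc ∫ x, (starRingEnd ℂ) (ξ x) * (c * ⟪φ x, g⟫) ∂μ
                = ∫ x, c * ((starRingEnd ℂ) (ξ x) * ⟪φ x, g⟫) ∂μ := by
                  simp only [mul_left_comm]
              _ = c * ∫ x, (starRingEnd ℂ) (ξ x) * ⟪φ x, g⟫ ∂μ := integral_const_mul _ _ }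
        (by
          obtain ⟨c, hc⟩ := h.2.2
          refine ⟨c, fun g => ?_⟩
          have he : ∫ x, (starRingEnd ℂ) (ξ x) * ⟪φ x, g⟫ ∂μ
              = (starRingEnd ℂ) (∫ x, ξ x * ⟪g, φ x⟫ ∂μ) := by
            rw [← integral_conj]
            congr 1; funext x
            simp [map_mul]
          simp only [LinearMap.coe_mk, AddHom.coe_mk]
          rw [he, RCLike.norm_conj]
          exact hc g))
  else 0

/-- The norm `‖[ξ]_φ‖_φ = sup_{‖g‖ ≤ 1} |∫ ξ(x) ⟨φ(x), g⟩ dμ(x)|` (computed on a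
representative; it only depends on the class `[ξ]_φ = ξ + Ker T_φ`). -/
def Vnorm (μ : Measure X) (φ : X → H) (ξ : X → ℂ) : ℝ :=
  ⨆ g : {g : H // ‖g‖ ≤ 1}, ‖∫ x, ξ x * ⟪(g : H), φ x⟫ ∂μ‖

/-- The range of `T̂_φ : V_φ(X,μ) → H` (equivalently, of `T_φ` on `𝒱_φ(X,μ)`). -/
def Tran (μ : Measure X) (φ : X → H) : Set H := Tmap μ φ '' {ξ | MemV μ φ ξ}

/-- The analysis coefficient map: `(C_ψ f)(x) = ⟨f, ψ(x)⟩`. -/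
def Cpsi (ψ : X → H) (f : H) : X → ℂ := fun x => ⟪ψ x, f⟫

/-- `φ` is `μ`-total: `Ker C_φ = {0}`, i.e. if `∫ ξ(x) ⟨φ(x), f⟩ dμ(x) = 0` for every
`ξ ∈ 𝒱_φ(X,μ)`, then `f = 0`. -/
def MuTotal (μ : Measure X) (φ : X → H) : Prop :=
  ∀ f : H, (∀ ξ, MemV μ φ ξ → ∫ x, ξ x * ⟪f, φ x⟫ ∂μ = 0) → f = 0

/-- `S : H ≃L[ℂ] H` represents the sesquilinear form `Ω_{ψ,φ}`:
`⟨S f, g⟩ = ∫ ⟨f, ψ(x)⟩ ⟨φ(x), g⟩ dμ(x)` for all `f, g ∈ H`. -/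
def IsAnalysisOp (μ : Measure X) (ψ φ : X → H) (S : H ≃L[ℂ] H) : Prop :=
  ∀ f g : H, ⟪g, S f⟫ = ∫ x, ⟪ψ x, f⟫ * ⟪g, φ x⟫ ∂μ

/-- `(ψ, φ)` is a reproducing pair: both weakly measurable, the form
`Ω_{ψ,φ}(f,g) = ∫ ⟨f,ψ(x)⟩⟨φ(x),g⟩ dμ(x)` is well defined (integrable) and bounded, and the
associated bounded operator `S_{ψ,φ}` has a bounded everywhere-defined inverse. -/
def IsReproducingPair (μ : Measure X) (ψ φ : X → H) : Prop :=
  WeaklyMeasurable ψ ∧ WeaklyMeasurable φ ∧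
    (∀ f g : H, Integrable (fun x => ⟪ψ x, f⟫ * ⟪g, φ x⟫) μ) ∧
    ∃ S : H ≃L[ℂ] H, IsAnalysisOp μ ψ φ S

/-- Completeness of `V_φ(X,μ)` in the norm `‖·‖_φ`, phrased via representatives:
every `‖·‖_φ`-Cauchy sequence of elements of `𝒱_φ(X,μ)` converges in `‖·‖_φ`
to an element of `𝒱_φ(X,μ)`. -/
def VComplete (μ : Measure X) (φ : X → H) : Prop :=
  ∀ ξ : ℕ → X → ℂ, (∀ n, MemV μ φ (ξ n)) →
    (∀ ε : ℝ, 0 < ε → ∃ N, ∀ m ≥ N, ∀ n ≥ N, Vnorm μ φ (ξ m - ξ n) < ε) →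
    ∃ η, MemV μ φ η ∧ Tendsto (fun n => Vnorm μ φ (ξ n - η)) atTop (𝓝 0)

/-- `F` is (induced by) a bounded linear functional on `V_φ(X,μ)`: it is linear on `𝒱_φ(X,μ)`,
constant on the classes of `V_φ(X,μ) = 𝒱_φ(X,μ)/Ker T_φ`, and bounded for `‖·‖_φ`. -/
def IsBddLinearFunctional (μ : Measure X) (φ : X → H) (F : (X → ℂ) → ℂ) : Prop :=
  (∀ ξ η, MemV μ φ ξ → MemV μ φ η → F (ξ + η) = F ξ + F η) ∧
  (∀ (c : ℂ) ξ, MemV μ φ ξ → F (c • ξ) = c * F ξ) ∧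
  (∀ ξ η, MemV μ φ ξ → MemV μ φ η → Tmap μ φ (ξ - η) = 0 → F ξ = F η) ∧
  ∃ c : ℝ, ∀ ξ, MemV μ φ ξ → ‖F ξ‖ ≤ c * Vnorm μ φ ξ

/-- The dual norm `‖F‖_{φ*} = sup_{‖[ξ]_φ‖_φ ≤ 1} |F([ξ]_φ)|`. -/
def DualNorm (μ : Measure X) (φ : X → H) (F : (X → ℂ) → ℂ) : ℝ :=
  ⨆ ξ : {ξ : X → ℂ // MemV μ φ ξ ∧ Vnorm μ φ ξ ≤ 1}, ‖F ξ.1‖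

/-- `V_φ(X,μ)` and `V_ψ(X,μ)` are conjugate dual to each other with respect to the pairing
`⟨⟨ξ, η⟩⟩ = ∫ ξ(x) conj(η(x)) dμ(x)`: the pairing is well defined, each class `[η]_ψ` gives a
bounded linear functional on `V_φ(X,μ)`, and `[η]_ψ ↦ ⟨⟨·, η⟩⟩` is a bijection from `V_ψ(X,μ)`
onto the dual of `V_φ(X,μ)`. -/
def ConjDual (μ : Measure X) (φ ψ : X → H) : Prop :=
  (∀ ξ η, MemV μ φ ξ → MemV μ ψ η →
      Integrable (fun x => ξ x * (starRingEnd ℂ) (η x)) μ) ∧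
  (∀ η, MemV μ ψ η →
      IsBddLinearFunctional μ φ (fun ξ => ∫ x, ξ x * (starRingEnd ℂ) (η x) ∂μ)) ∧
  (∀ η η', MemV μ ψ η → MemV μ ψ η' →
      (∀ ξ, MemV μ φ ξ →
        ∫ x, ξ x * (starRingEnd ℂ) (η x) ∂μ = ∫ x, ξ x * (starRingEnd ℂ) (η' x) ∂μ) →
      Tmap μ ψ (η - η') = 0) ∧
  (∀ F, IsBddLinearFunctional μ φ F →
      ∃ η, MemV μ ψ η ∧ ∀ ξ, MemV μ φ ξ → F ξ = ∫ x, ξ x * (starRingEnd ℂ) (η x) ∂μ)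

/-!
With `C f = ⟨f, ψ(·)⟩ ∈ L²(X, μ)`, the defining identity of the reproducing pair `(ψ, ψ)` reads
`⟨C g, C f⟩ = ⟨g, S f⟩`, i.e. `S = C* C`. Hence `‖C f‖² = ⟨S f, f⟩ ≤ ‖S‖ ‖f‖²`, which makes `C`
bounded (upper frame bound), and `‖S f‖ = ‖C* C f‖ ≤ ‖C‖ ‖C f‖` together with the bounded inverse
of `S` gives `‖f‖ ≤ ‖S⁻¹‖ ‖C‖ ‖C f‖` (lower frame bound). So `C` is bounded below and its range
is closed in `L²`. Finally `T_ψ C_ψ = S` is onto, so every class `[ξ]_ψ` contains some `C_ψ f`.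
-/

section InnerProductBounds

variable {𝕜 E F : Type*} [RCLike 𝕜] [NormedAddCommGroup E] [InnerProductSpace 𝕜 E]
  [NormedAddCommGroup F] [InnerProductSpace 𝕜 F]

theorem norm_apply_le_sqrt_mul_of_inner_map_map_eq {C : E →ₗ[𝕜] F} {T : E →L[𝕜] E}
    (hCT : ∀ f g, inner 𝕜 (C g) (C f) = inner 𝕜 g (T f)) (f : E) :
    ‖C f‖ ≤ √‖T‖ * ‖f‖ := by
  rw [← Real.sqrt_sq (norm_nonneg f), ← Real.sqrt_mul (norm_nonneg _),
    Real.le_sqrt (norm_nonneg _) (by positivity)]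
  calc ‖C f‖ ^ 2 = RCLike.re (inner 𝕜 f (T f)) := by rw [norm_sq_eq_re_inner (𝕜 := 𝕜), hCT]
    _ ≤ ‖inner 𝕜 f (T f)‖ := RCLike.re_le_norm _
    _ ≤ ‖f‖ * ‖T f‖ := norm_inner_le_norm _ _
    _ ≤ ‖f‖ * (‖T‖ * ‖f‖) := by gcongr; exact T.le_opNorm f
    _ = ‖T‖ * ‖f‖ ^ 2 := by ring

theorem norm_apply_le_of_inner_map_map_eq {C : E →L[𝕜] F} {T : E →L[𝕜] E}
    (hCT : ∀ f g, inner 𝕜 (C g) (C f) = inner 𝕜 g (T f)) (f : E) :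
    ‖T f‖ ≤ ‖C‖ * ‖C f‖ := by
  rcases (norm_nonneg (T f)).eq_or_lt with h0 | h0
  · rw [← h0]; positivity
  refine le_of_mul_le_mul_right ?_ h0
  calc ‖T f‖ * ‖T f‖ = RCLike.re (inner 𝕜 (C (T f)) (C f)) := by
        rw [hCT, ← norm_sq_eq_re_inner (𝕜 := 𝕜), sq]
    _ ≤ ‖C (T f)‖ * ‖C f‖ := (RCLike.re_le_norm _).trans (norm_inner_le_norm _ _)
    _ ≤ ‖C‖ * ‖T f‖ * ‖C f‖ := by gcongr; exact C.le_opNorm _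
    _ = ‖C‖ * ‖C f‖ * ‖T f‖ := by ring

theorem norm_le_of_inner_map_map_eq {C : E →L[𝕜] F} {S : E ≃L[𝕜] E}
    (hCS : ∀ f g, inner 𝕜 (C g) (C f) = inner 𝕜 g (S f)) (f : E) :
    ‖f‖ ≤ ‖(S.symm : E →L[𝕜] E)‖ * ‖C‖ * ‖C f‖ := by
  calc ‖f‖ = ‖(S.symm : E →L[𝕜] E) (S f)‖ := by simp
    _ ≤ ‖(S.symm : E →L[𝕜] E)‖ * ‖S f‖ := ContinuousLinearMap.le_opNorm _ _
    _ ≤ ‖(S.symm : E →L[𝕜] E)‖ * (‖C‖ * ‖C f‖) := by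
        gcongr; exact norm_apply_le_of_inner_map_map_eq (T := (S : E →L[𝕜] E)) hCS f
    _ = _ := by ring

theorem antilipschitz_of_inner_map_map_eq {C : E →L[𝕜] F} {S : E ≃L[𝕜] E}
    (hCS : ∀ f g, inner 𝕜 (C g) (C f) = inner 𝕜 g (S f)) :
    AntilipschitzWith (‖(S.symm : E →L[𝕜] E)‖₊ * ‖C‖₊) C :=
  C.antilipschitz_of_bound fun f => by simpa using norm_le_of_inner_map_map_eq hCS f

theorem exists_pos_mul_sq_le_norm_apply_sq_of_inner_map_map_eq {C : E →L[𝕜] F}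
    {S : E ≃L[𝕜] E} (hCS : ∀ f g, inner 𝕜 (C g) (C f) = inner 𝕜 g (S f)) :
    ∃ m : ℝ, 0 < m ∧ ∀ f, m * ‖f‖ ^ 2 ≤ ‖C f‖ ^ 2 := by
  set K := ‖(S.symm : E →L[𝕜] E)‖ * ‖C‖ + 1
  have hK : 0 < K := by positivity
  refine ⟨(K ^ 2)⁻¹, by positivity, fun f => ?_⟩
  have hf : ‖f‖ ≤ K * ‖C f‖ :=
    (norm_le_of_inner_map_map_eq hCS f).trans (by gcongr; linarith)
  rw [inv_mul_le_iff₀ (by positivity), ← mul_pow]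
  gcongr

end InnerProductBounds

section CoefficientMaps

variable {E Y : Type*} [NormedAddCommGroup E] [InnerProductSpace ℂ E]

lemma re_inner_mul_inner_eq_norm_sq (x y : E) : (⟪x, y⟫ * ⟪y, x⟫).re = ‖⟪x, y⟫‖ ^ 2 := by
  rw [← RCLike.re_to_complex, inner_mul_symm_re_eq_norm, norm_mul, norm_inner_symm, sq]

lemma Cpsi_add (ψ : Y → E) (f g : E) : Cpsi ψ (f + g) = Cpsi ψ f + Cpsi ψ g := by
  funext x; simp [Cpsi]

lemma Cpsi_smul (ψ : Y → E) (c : ℂ) (f : E) : Cpsi ψ (c • f) = c • Cpsi ψ f := by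
  funext x; simp [Cpsi]

variable [MeasurableSpace Y] {μ : Measure Y} {ψ φ : Y → E}

lemma MemV.integrable_conj {ξ : Y → ℂ} (hξ : MemV μ φ ξ) (g : E) :
    Integrable (fun x => (starRingEnd ℂ) (ξ x) * ⟪φ x, g⟫) μ := by
  simpa [map_mul] using RCLike.conjLIE.integrable_comp_iff.2 (hξ.2.1 g)

lemma MemV.sub {ξ η : Y → ℂ} (hξ : MemV μ φ ξ) (hη : MemV μ φ η) : MemV μ φ (ξ - η) := by
  obtain ⟨c, hc⟩ := hξ.2.2
  obtain ⟨c', hc'⟩ := hη.2.2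
  have hsub : ∀ g, (fun x => (ξ - η) x * ⟪g, φ x⟫)
      = (fun x => ξ x * ⟪g, φ x⟫) - fun x => η x * ⟪g, φ x⟫ := fun g => by
    funext x; simp [sub_mul]
  refine ⟨hξ.1.sub hη.1, fun g => hsub g ▸ (hξ.2.1 g).sub (hη.2.1 g), c + c', fun g => ?_⟩
  rw [hsub, integral_sub' (hξ.2.1 g) (hη.2.1 g), add_mul]
  exact (norm_sub_le _ _).trans (add_le_add (hc g) (hc' g))

lemma IsReproducingPair.memV_Cpsi (h : IsReproducingPair μ ψ φ) (f : E) :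
    MemV μ φ (Cpsi ψ f) := by
  obtain ⟨hψ, -, hint, S, hS⟩ := h
  refine ⟨hψ f, hint f, ‖(S : E →L[ℂ] E)‖ * ‖f‖, fun g => ?_⟩
  calc ‖∫ x, Cpsi ψ f x * ⟪g, φ x⟫ ∂μ‖ = ‖⟪g, S f⟫‖ := by rw [hS f g]; rfl
    _ ≤ ‖g‖ * (‖(S : E →L[ℂ] E)‖ * ‖f‖) :=
        (norm_inner_le_norm _ _).trans (by gcongr; exact (S : E →L[ℂ] E).le_opNorm f)
    _ = ‖(S : E →L[ℂ] E)‖ * ‖f‖ * ‖g‖ := by ring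

lemma IsReproducingPair.integrable_norm_inner_sq (h : IsReproducingPair μ ψ ψ) (f : E) :
    Integrable (fun x => ‖⟪ψ x, f⟫‖ ^ 2) μ := by
  simpa only [RCLike.re_to_complex, re_inner_mul_inner_eq_norm_sq] using (h.2.2.1 f f).re

lemma IsReproducingPair.memLp_Cpsi (h : IsReproducingPair μ ψ ψ) (f : E) :
    MemLp (Cpsi ψ f) 2 μ :=
  (memLp_two_iff_integrable_sq_norm (h.1 f).aestronglyMeasurable).2
    (h.integrable_norm_inner_sq f)

lemma IsAnalysisOp.integral_norm_inner_sq {S : E ≃L[ℂ] E} (hS : IsAnalysisOp μ ψ ψ S)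
    (h : IsReproducingPair μ ψ ψ) (f : E) :
    ∫ x, ‖⟪ψ x, f⟫‖ ^ 2 ∂μ = (⟪f, S f⟫).re := by
  rw [hS f f, ← RCLike.re_to_complex, ← integral_re (h.2.2.1 f f)]
  simp only [RCLike.re_to_complex, re_inner_mul_inner_eq_norm_sq]

def IsReproducingPair.cpsiLpₗ (h : IsReproducingPair μ ψ ψ) : E →ₗ[ℂ] Lp ℂ 2 μ where
  toFun f := (h.memLp_Cpsi f).toLp
  map_add' f g := by
    simp_rw [← MemLp.toLp_add]
    exact MemLp.toLp_congr _ _ (Cpsi_add ψ f g).eventuallyEq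
  map_smul' c f := by
    simp_rw [RingHom.id_apply, ← MemLp.toLp_const_smul]
    exact MemLp.toLp_congr _ _ (Cpsi_smul ψ c f).eventuallyEq

lemma IsReproducingPair.coeFn_cpsiLpₗ (h : IsReproducingPair μ ψ ψ) (f : E) :
    ⇑(h.cpsiLpₗ f) =ᵐ[μ] Cpsi ψ f :=
  (h.memLp_Cpsi f).coeFn_toLp

lemma IsAnalysisOp.inner_cpsiLpₗ {S : E ≃L[ℂ] E} (hS : IsAnalysisOp μ ψ ψ S)
    (h : IsReproducingPair μ ψ ψ) (f g : E) :
    ⟪h.cpsiLpₗ g, h.cpsiLpₗ f⟫ = ⟪g, S f⟫ := by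
  rw [hS f g, L2.inner_def]
  refine integral_congr_ae ?_
  filter_upwards [h.coeFn_cpsiLpₗ f, h.coeFn_cpsiLpₗ g] with x hf hg
  rw [hf, hg, RCLike.inner_apply, Cpsi, Cpsi, inner_conj_symm, mul_comm]

def IsReproducingPair.cpsiLp (h : IsReproducingPair μ ψ ψ) : E →L[ℂ] Lp ℂ 2 μ :=
  h.cpsiLpₗ.mkContinuousOfExistsBound <| by
    obtain ⟨S, hS⟩ := h.2.2.2
    exact ⟨_, norm_apply_le_sqrt_mul_of_inner_map_map_eq (T := (S : E →L[ℂ] E))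
      (hS.inner_cpsiLpₗ h)⟩

lemma IsReproducingPair.coeFn_cpsiLp (h : IsReproducingPair μ ψ ψ) (f : E) :
    ⇑(h.cpsiLp f) =ᵐ[μ] Cpsi ψ f :=
  h.coeFn_cpsiLpₗ f

lemma IsAnalysisOp.inner_cpsiLp {S : E ≃L[ℂ] E} (hS : IsAnalysisOp μ ψ ψ S)
    (h : IsReproducingPair μ ψ ψ) (f g : E) :
    ⟪h.cpsiLp g, h.cpsiLp f⟫ = ⟪g, S f⟫ :=
  hS.inner_cpsiLpₗ h f g

lemma IsReproducingPair.norm_cpsiLp_sq (h : IsReproducingPair μ ψ ψ) (f : E) :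
    ‖h.cpsiLp f‖ ^ 2 = ∫ x, ‖⟪ψ x, f⟫‖ ^ 2 ∂μ := by
  obtain ⟨S, hS⟩ := h.2.2.2
  rw [norm_sq_eq_re_inner (𝕜 := ℂ), hS.inner_cpsiLp h, hS.integral_norm_inner_sq h,
    RCLike.re_to_complex]

lemma IsReproducingPair.range_cpsiLp (h : IsReproducingPair μ ψ ψ) :
    Set.range h.cpsiLp = {F : Lp ℂ 2 μ | ∃ f : E, Cpsi ψ f =ᵐ[μ] ⇑F} := by
  ext F
  constructor
  · rintro ⟨f, rfl⟩
    exact ⟨f, (h.coeFn_cpsiLp f).symm⟩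
  · rintro ⟨f, hf⟩
    exact ⟨f, Lp.ext ((h.coeFn_cpsiLp f).trans hf)⟩

variable [CompleteSpace E]

lemma inner_Tmap {ξ : Y → ℂ} (hξ : MemV μ φ ξ) (g : E) :
    ⟪Tmap μ φ ξ, g⟫ = ∫ x, (starRingEnd ℂ) (ξ x) * ⟪φ x, g⟫ ∂μ := by
  rw [Tmap, dif_pos hξ, InnerProductSpace.toDual_symm_apply]
  rfl

lemma Tmap_sub {ξ η : Y → ℂ} (hξ : MemV μ φ ξ) (hη : MemV μ φ η) :
    Tmap μ φ (ξ - η) = Tmap μ φ ξ - Tmap μ φ η := by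
  refine ext_inner_right ℂ fun g => ?_
  rw [inner_sub_left, inner_Tmap (hξ.sub hη), inner_Tmap hξ, inner_Tmap hη,
    ← integral_sub (hξ.integrable_conj g) (hη.integrable_conj g)]
  congr 1; funext x; simp [sub_mul]

lemma IsAnalysisOp.Tmap_Cpsi {S : E ≃L[ℂ] E} (hS : IsAnalysisOp μ ψ φ S) {f : E}
    (hf : MemV μ φ (Cpsi ψ f)) : Tmap μ φ (Cpsi ψ f) = S f := by
  refine ext_inner_right ℂ fun g => ?_
  rw [inner_Tmap hf, ← inner_conj_symm, hS f g, ← integral_conj]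
  congr 1; funext x
  simp [Cpsi, map_mul]

lemma IsReproducingPair.exists_Tmap_Cpsi_sub_eq_zero (h : IsReproducingPair μ ψ φ)
    {ξ : Y → ℂ} (hξ : MemV μ φ ξ) : ∃ f : E, Tmap μ φ (Cpsi ψ f - ξ) = 0 := by
  obtain ⟨S, hS⟩ := h.2.2.2
  refine ⟨S.symm (Tmap μ φ ξ), ?_⟩
  rw [Tmap_sub (h.memV_Cpsi _) hξ, hS.Tmap_Cpsi (h.memV_Cpsi _), S.apply_symm_apply, sub_self]

end CoefficientMaps

theorem statement13_general (μ : Measure X) (ψ : X → H)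
    (h : IsReproducingPair μ ψ ψ) :
    (∃ m M : ℝ, 0 < m ∧ ∀ f : H,
        Integrable (fun x => ‖⟪ψ x, f⟫‖ ^ 2) μ ∧
        m * ‖f‖ ^ 2 ≤ ∫ x, ‖⟪ψ x, f⟫‖ ^ 2 ∂μ ∧
        ∫ x, ‖⟪ψ x, f⟫‖ ^ 2 ∂μ ≤ M * ‖f‖ ^ 2) ∧
    (∀ ξ, MemV μ ψ ξ → ∃ f : H,
        MemLp (Cpsi ψ f) 2 μ ∧ Tmap μ ψ (Cpsi ψ f - ξ) = 0) ∧
    IsClosed {F : Lp ℂ 2 μ | ∃ f : H, Cpsi ψ f =ᵐ[μ] ⇑F} := by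
  obtain ⟨S, hS⟩ := h.2.2.2
  have hCS := hS.inner_cpsiLp h
  obtain ⟨m, hm, hlower⟩ := exists_pos_mul_sq_le_norm_apply_sq_of_inner_map_map_eq hCS
  refine ⟨⟨m, ‖h.cpsiLp‖ ^ 2, hm, fun f => ⟨h.integrable_norm_inner_sq f, ?_, ?_⟩⟩, ?_, ?_⟩
  · exact h.norm_cpsiLp_sq f ▸ hlower f
  · rw [← h.norm_cpsiLp_sq, ← mul_pow]
    gcongr
    exact h.cpsiLp.le_opNorm f
  · intro ξ hξ
    obtain ⟨f, hf⟩ := h.exists_Tmap_Cpsi_sub_eq_zero hξ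
    exact ⟨f, h.memLp_Cpsi f, hf⟩
  · rw [← h.range_cpsiLp]
    exact (antilipschitz_of_inner_map_map_eq hCS).isClosed_range
      h.cpsiLp.uniformContinuous

/-- Let `ψ` be weakly measurable with `(ψ,ψ)` a reproducing pair. Then `ψ`
is a continuous frame (`m‖f‖² ≤ ∫ |⟨f,ψ(x)⟩|² dμ(x) ≤ M‖f‖²`), and `V_ψ(X,μ)` is identified
with a closed subspace of `L²(X,dμ)`: every class has a representative `⟨f,ψ(·)⟩ ∈ L²`, and
the corresponding subspace of `L²(X,dμ)` is closed. -/
theorem statement13 (μ : Measure X) [μ.Regular] (ψ : X → H)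
    (h : IsReproducingPair μ ψ ψ) :
    (∃ m M : ℝ, 0 < m ∧ ∀ f : H,
        Integrable (fun x => ‖⟪ψ x, f⟫‖ ^ 2) μ ∧
        m * ‖f‖ ^ 2 ≤ ∫ x, ‖⟪ψ x, f⟫‖ ^ 2 ∂μ ∧
        ∫ x, ‖⟪ψ x, f⟫‖ ^ 2 ∂μ ≤ M * ‖f‖ ^ 2) ∧
    (∀ ξ, MemV μ ψ ξ → ∃ f : H,
        MemLp (Cpsi ψ f) 2 μ ∧ Tmap μ ψ (Cpsi ψ f - ξ) = 0) ∧
    IsClosed {F : Lp ℂ 2 μ | ∃ f : H, Cpsi ψ f =ᵐ[μ] ⇑F} :=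
  statement13_general μ ψ h
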